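/- Let d ∈ {2,3} and Γ, L, θ, κ > 0. Let ψ : ℝ^{d×d} → ℝ be twice continuously differentiable and convex, such that for every Q ∈ Sym₀(d) the Frobenius gradient ∇ψ(Q) is symmetric and commutes with Q. Let T > 0, let u : ℝᵈ × (0,T) → ℝᵈ be smooth and divergence-free, let W := ((∇u) − (∇u)ᵀ)/2 denote the skew part of the velocity gradient, and let Q : ℝᵈ × (0,T) → Sym₀(d) be smooth and satisfy pointwise the co-rotational equation ∂_t Q + (u·∇)Q − (WQ − QW) = Γ( L ΔQ − θ⟨∇ψ(Q)⟩ + κ Q ). Then pointwise on ℝᵈ × (0,T) one has the parabolic inequality ∂_t[ψ(Q)] + (u·∇)[ψ(Q)] − Γ L Δ[ψ(Q)] ≤ (Γκ²/(2θ)) tr[Q²]. -/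

import Mathlib

open Matrix MeasureTheory

attribute [local instance] Matrix.normedAddCommGroup Matrix.normedSpace

noncomputable section

/-- Space-time `ℝ^d × ℝ` (a point is `(x, t)`). -/
abbrev SpTime (d : ℕ) := (Fin d → ℝ) × ℝ

/-- The `j`-th spatial direction in space-time. -/
def sdir (d : ℕ) (j : Fin d) : SpTime d := (Pi.single j 1, 0)

/-- The time direction in space-time. -/
def tdir (d : ℕ) : SpTime d := (0, 1)

/-- Spatial partial derivative `∂_j` of a space-time map. -/
noncomputable def spd {d : ℕ} {M : Type*} [NormedAddCommGroup M] [NormedSpace ℝ M]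
    (j : Fin d) (F : SpTime d → M) (z : SpTime d) : M :=
  fderiv ℝ F z (sdir d j)

/-- Time derivative `∂_t` of a space-time map. -/
noncomputable def tpd {d : ℕ} {M : Type*} [NormedAddCommGroup M] [NormedSpace ℝ M]
    (F : SpTime d → M) (z : SpTime d) : M :=
  fderiv ℝ F z (tdir d)

/-- Spatial Laplacian `Δ = Σ_m ∂_m ∂_m` of a space-time map. -/
noncomputable def slap {d : ℕ} {M : Type*} [NormedAddCommGroup M] [NormedSpace ℝ M]
    (F : SpTime d → M) (z : SpTime d) : M :=
  ∑ m : Fin d, spd m (spd m F) z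

/-- The velocity gradient matrix, `(∇u)_{ij} = ∂_j u_i`. -/
noncomputable def gradVel {d : ℕ} (u : SpTime d → (Fin d → ℝ)) (z : SpTime d) :
    Matrix (Fin d) (Fin d) ℝ :=
  Matrix.of fun i j => spd j u z i

/-- The skew-symmetric part `D₀ = ((∇u) - (∇u)ᵀ)/2` of the velocity gradient. -/
noncomputable def skewPart {d : ℕ} (u : SpTime d → (Fin d → ℝ)) (z : SpTime d) :
    Matrix (Fin d) (Fin d) ℝ :=
  ((1 : ℝ) / 2) • (gradVel u z - (gradVel u z)ᵀ)

/-- The symmetric part `D = ((∇u) + (∇u)ᵀ)/2` of the velocity gradient. -/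
noncomputable def symPart {d : ℕ} (u : SpTime d → (Fin d → ℝ)) (z : SpTime d) :
    Matrix (Fin d) (Fin d) ℝ :=
  ((1 : ℝ) / 2) • (gradVel u z + (gradVel u z)ᵀ)

/-- The trace-free part `⟨A⟩ = A - (tr[A]/d) I` of a matrix. -/
noncomputable def tfree {d : ℕ} (A : Matrix (Fin d) (Fin d) ℝ) : Matrix (Fin d) (Fin d) ℝ :=
  A - (A.trace / (d : ℝ)) • (1 : Matrix (Fin d) (Fin d) ℝ)

/-!
By the chain rule, `(∂_t + u·∇ - ΓLΔ) ψ(Q) = Dψ(Q)[(∂_t + u·∇ - ΓLΔ) Q] - ΓL Σₘ D²ψ(Q)(∂ₘQ, ∂ₘQ)`,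
and the last sum is nonnegative since `ψ` is convex. Substituting the equation for `Q`, the
co-rotational term drops out because `∇ψ(Q)` commutes with `Q`:
`tr(∇ψ(Q)(WQ - QW)) = tr((Q∇ψ(Q) - ∇ψ(Q)Q)W) = 0`. As `Q` and `⟨∇ψ(Q)⟩` are trace-free,
`∇ψ(Q)` may be replaced by `A = ⟨∇ψ(Q)⟩`, which leaves `Γκ tr(AQ) - Γθ tr(A²)`, and Young's
inequality bounds this by `Γκ²/(4θ) tr(Q²)`.
-/

section Calculus

variable {E : Type*} [NormedAddCommGroup E] [NormedSpace ℝ E]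

theorem ConvexOn.fderiv_fderiv_apply_self_nonneg {ψ : E → ℝ} (hconv : ConvexOn ℝ Set.univ ψ)
    (hψ : ContDiff ℝ 2 ψ) (X V : E) : 0 ≤ fderiv ℝ (fderiv ℝ ψ) X V V := by
  set c := AffineMap.lineMap (k := ℝ) X (X + V)
  have hc : ∀ s, HasDerivAt c V s := fun s => by
    simpa using AffineMap.hasDerivAt_lineMap (a := X) (b := X + V) (x := s)
  have hψc : ∀ s, HasDerivAt (ψ ∘ c) (fderiv ℝ ψ (c s) V) s := fun s =>
    ((hψ.differentiable two_ne_zero) (c s)).hasFDerivAt.comp_hasDerivAt s (hc s)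
  have hmono : Monotone fun s => fderiv ℝ ψ (c s) V := by
    have := (hconv.comp_affineMap c).monotoneOn_deriv fun s _ => (hψc s).differentiableAt
    intro a b hab
    simpa only [(hψc _).deriv] using this trivial trivial hab
  have hD2 : HasDerivAt (fun s => fderiv ℝ ψ (c s) V) (fderiv ℝ (fderiv ℝ ψ) X V V) 0 := by
    have hD : HasFDerivAt (fderiv ℝ ψ) (fderiv ℝ (fderiv ℝ ψ) (c 0)) (c 0) :=
      ((hψ.fderiv_right one_add_one_eq_two.le).differentiable one_ne_zero _).hasFDerivAt
    have h := (ContinuousLinearMap.apply ℝ ℝ V).hasFDerivAt.comp_hasDerivAt 0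
      (hD.comp_hasDerivAt 0 (hc 0))
    rwa [show c 0 = X by simp [c]] at h
  simpa [hD2.deriv] using hmono.deriv_nonneg (x := 0)

end Calculus

section SpaceTime

variable {d : ℕ} {E F : Type*} [NormedAddCommGroup E] [NormedSpace ℝ E]
  [NormedAddCommGroup F] [NormedSpace ℝ F] {ψ : E → F} {Q : SpTime d → E} {z : SpTime d}

theorem spd_comp (j : Fin d) (hψ : DifferentiableAt ℝ ψ (Q z)) (hQ : DifferentiableAt ℝ Q z) :
    spd j (fun w => ψ (Q w)) z = fderiv ℝ ψ (Q z) (spd j Q z) := by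
  rw [spd, fderiv_fun_comp z hψ hQ]
  rfl

theorem tpd_comp (hψ : DifferentiableAt ℝ ψ (Q z)) (hQ : DifferentiableAt ℝ Q z) :
    tpd (fun w => ψ (Q w)) z = fderiv ℝ ψ (Q z) (tpd Q z) := by
  rw [tpd, fderiv_fun_comp z hψ hQ]
  rfl

theorem spd_spd_comp (i j : Fin d) (hψ : ContDiff ℝ 2 ψ) (hQ : ContDiff ℝ 2 Q) :
    spd i (spd j fun w => ψ (Q w)) z
      = fderiv ℝ (fderiv ℝ ψ) (Q z) (spd i Q z) (spd j Q z)
        + fderiv ℝ ψ (Q z) (spd i (spd j Q) z) := by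
  have hDψ := (hψ.fderiv_right one_add_one_eq_two.le).differentiable one_ne_zero
  have hDQ := (hQ.fderiv_right one_add_one_eq_two.le).differentiable one_ne_zero
  have hspd : spd j (fun w => ψ (Q w)) = fun w => fderiv ℝ ψ (Q w) (spd j Q w) :=
    funext fun w => spd_comp j (hψ.differentiable two_ne_zero _) (hQ.differentiable two_ne_zero w)
  have hQz := hQ.differentiable two_ne_zero z
  have hDψQ : DifferentiableAt ℝ (fun w => fderiv ℝ ψ (Q w)) z := (hDψ _).comp z hQz
  have hspdQ : DifferentiableAt ℝ (spd j Q) z :=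
    (hDQ z).clm_apply (differentiableAt_const _)
  rw [hspd, spd, fderiv_clm_apply hDψQ hspdQ, fderiv_fun_comp z (hDψ _) hQz, add_comm]
  rfl

def advectionDiffusion (v : Fin d → ℝ) (c : ℝ) (F : SpTime d → E) (z : SpTime d) : E :=
  tpd F z + ∑ i, v i • spd i F z - c • slap F z

theorem advectionDiffusion_comp {ψ : E → ℝ} (hψ : ContDiff ℝ 2 ψ) (hQ : ContDiff ℝ 2 Q)
    (v : Fin d → ℝ) (c : ℝ) :
    advectionDiffusion v c (fun w => ψ (Q w)) z
      = fderiv ℝ ψ (Q z) (advectionDiffusion v c Q z)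
        - c * ∑ m, fderiv ℝ (fderiv ℝ ψ) (Q z) (spd m Q z) (spd m Q z) := by
  have hψQ := hψ.differentiable two_ne_zero (Q z)
  have hQz := hQ.differentiable two_ne_zero z
  simp only [advectionDiffusion, slap, spd_spd_comp _ _ hψ hQ, tpd_comp hψQ hQz,
    spd_comp _ hψQ hQz, map_add, map_sub, map_smul, map_sum, Finset.sum_add_distrib, smul_eq_mul]
  ring

theorem ConvexOn.advectionDiffusion_comp_le {ψ : E → ℝ} (hconv : ConvexOn ℝ Set.univ ψ)
    (hψ : ContDiff ℝ 2 ψ) (hQ : ContDiff ℝ 2 Q) (v : Fin d → ℝ) {c : ℝ} (hc : 0 ≤ c) :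
    advectionDiffusion v c (fun w => ψ (Q w)) z
      ≤ fderiv ℝ ψ (Q z) (advectionDiffusion v c Q z) := by
  rw [advectionDiffusion_comp hψ hQ, sub_le_self_iff]
  exact mul_nonneg hc <| Finset.sum_nonneg fun m _ =>
    hconv.fderiv_fderiv_apply_self_nonneg hψ _ _

end SpaceTime

section Trace

variable {n R : Type*} [Fintype n]

theorem Matrix.trace_mul_commutator_eq_zero [CommRing R] {G Q : Matrix n n R} (h : G * Q = Q * G)
    (W : Matrix n n R) : (G * (W * Q - Q * W)).trace = 0 := by
  rw [Matrix.mul_sub, trace_sub, sub_eq_zero, trace_mul_cycle', ← Matrix.mul_assoc, ← h,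
    Matrix.mul_assoc]

theorem Matrix.trace_mul_eq_sum_of_transpose_eq [CommSemiring R] (A : Matrix n n R)
    {B : Matrix n n R} (hB : Bᵀ = B) : (A * B).trace = ∑ i, ∑ j, A i j * B i j := by
  simp only [trace, diag, mul_apply]
  refine Finset.sum_congr rfl fun i _ => Finset.sum_congr rfl fun j _ => ?_
  rw [← hB, transpose_apply, hB]

theorem Matrix.trace_mul_self_nonneg_of_transpose_eq {B : Matrix n n ℝ} (hB : Bᵀ = B) :
    0 ≤ (B * B).trace := by
  rw [trace_mul_eq_sum_of_transpose_eq B hB]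
  exact Finset.sum_nonneg fun i _ => Finset.sum_nonneg fun j _ => mul_self_nonneg _

theorem Matrix.young_trace_mul {A B : Matrix n n ℝ} (hA : Aᵀ = A) (hB : Bᵀ = B) (κ : ℝ)
    {θ : ℝ} (hθ : 0 < θ) :
    κ * (A * B).trace - θ * (A * A).trace ≤ κ ^ 2 / (4 * θ) * (B * B).trace := by
  simp only [trace_mul_eq_sum_of_transpose_eq _ hA, trace_mul_eq_sum_of_transpose_eq _ hB,
    Finset.mul_sum, ← Finset.sum_sub_distrib]
  refine Finset.sum_le_sum fun i _ => Finset.sum_le_sum fun j _ => ?_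
  rw [div_mul_eq_mul_div, le_div_iff₀ (by positivity)]
  nlinarith [sq_nonneg (2 * θ * A i j - κ * B i j)]

end Trace

section TraceFree

variable {d : ℕ}

theorem trace_tfree (A : Matrix (Fin d) (Fin d) ℝ) : (tfree A).trace = 0 := by
  rcases eq_or_ne d 0 with rfl | hd
  · exact Matrix.trace_fin_zero _
  · rw [tfree, trace_sub, trace_smul, trace_one, Fintype.card_fin, smul_eq_mul,
      div_mul_cancel₀ _ (Nat.cast_ne_zero.2 hd), sub_self]

theorem transpose_tfree (A : Matrix (Fin d) (Fin d) ℝ) : (tfree A)ᵀ = tfree Aᵀ := by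
  rw [tfree, tfree, transpose_sub, transpose_smul, transpose_one, trace_transpose]

theorem trace_tfree_mul_of_trace_eq_zero (A : Matrix (Fin d) (Fin d) ℝ)
    {Y : Matrix (Fin d) (Fin d) ℝ} (hY : Y.trace = 0) : (tfree A * Y).trace = (A * Y).trace := by
  rw [tfree, Matrix.sub_mul, trace_sub, Matrix.smul_mul, Matrix.one_mul, trace_smul, hY,
    smul_zero, sub_zero]

end TraceFree

theorem corotational_parabolic_inequality_general (d : ℕ)
    (Γ L θ κ : ℝ) (hΓ : 0 < Γ) (hL : 0 < L) (hθ : 0 < θ)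
    (ψ : Matrix (Fin d) (Fin d) ℝ → ℝ) (hψ : ContDiff ℝ 2 ψ)
    (hconv : ConvexOn ℝ Set.univ ψ)
    (gradψ : Matrix (Fin d) (Fin d) ℝ → Matrix (Fin d) (Fin d) ℝ)
    (hgrad : ∀ X Y : Matrix (Fin d) (Fin d) ℝ, fderiv ℝ ψ X Y = ((gradψ X)ᵀ * Y).trace)
    (hgradQ : ∀ Q : Matrix (Fin d) (Fin d) ℝ, Qᵀ = Q → Q.trace = 0 →
      (gradψ Q)ᵀ = gradψ Q ∧ Q * gradψ Q = gradψ Q * Q)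
    (T : ℝ)
    (u : SpTime d → (Fin d → ℝ))
    (Q : SpTime d → Matrix (Fin d) (Fin d) ℝ) (hQ : ContDiff ℝ (⊤ : ℕ∞) Q)
    (hQsym : ∀ z, (Q z)ᵀ = Q z) (hQtr : ∀ z, (Q z).trace = 0)
    (heq : ∀ (x : Fin d → ℝ), ∀ t ∈ Set.Ioo (0 : ℝ) T,
      tpd Q (x, t) + (∑ i : Fin d, u (x, t) i • spd i Q (x, t))
          - (skewPart u (x, t) * Q (x, t) - Q (x, t) * skewPart u (x, t))
        = Γ • (L • slap Q (x, t) - θ • tfree (gradψ (Q (x, t))) + κ • Q (x, t))) :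
    ∀ (x : Fin d → ℝ), ∀ t ∈ Set.Ioo (0 : ℝ) T,
      tpd (fun z => ψ (Q z)) (x, t)
          + (∑ i : Fin d, u (x, t) i * spd i (fun z => ψ (Q z)) (x, t))
          - Γ * L * slap (fun z => ψ (Q z)) (x, t)
        ≤ Γ * κ ^ 2 / (2 * θ) * (Q (x, t) * Q (x, t)).trace := by
  intro x t ht
  set z : SpTime d := (x, t)
  obtain ⟨hGsymm, hGcomm⟩ := hgradQ (Q z) (hQsym z) (hQtr z)
  set A := tfree (gradψ (Q z))
  have hA : Aᵀ = A := by rw [transpose_tfree, hGsymm]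
  have hflow : advectionDiffusion (u z) (Γ * L) Q z
      = (skewPart u z * Q z - Q z * skewPart u z) - (Γ * θ) • A + (Γ * κ) • Q z := by
    rw [advectionDiffusion]
    linear_combination (norm := module) heq x t ht
  calc _ = advectionDiffusion (u z) (Γ * L) (fun w => ψ (Q w)) z := by
        simp only [advectionDiffusion, smul_eq_mul]
    _ ≤ fderiv ℝ ψ (Q z) (advectionDiffusion (u z) (Γ * L) Q z) :=
        hconv.advectionDiffusion_comp_le hψ (hQ.of_le (by norm_cast)) _ (by positivity)
    _ = Γ * (κ * (A * Q z).trace - θ * (A * A).trace) := by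
        rw [hgrad, hGsymm, hflow, Matrix.mul_add, Matrix.mul_sub, trace_add, trace_sub,
          Matrix.trace_mul_commutator_eq_zero hGcomm.symm, Matrix.mul_smul,
          Matrix.mul_smul, trace_smul, trace_smul,
          ← trace_tfree_mul_of_trace_eq_zero _ (hQtr z),
          ← trace_tfree_mul_of_trace_eq_zero _ (trace_tfree _), smul_eq_mul, smul_eq_mul]
        ring
    _ ≤ Γ * (κ ^ 2 / (4 * θ) * (Q z * Q z).trace) :=
        mul_le_mul_of_nonneg_left (Matrix.young_trace_mul hA (hQsym z) κ hθ) hΓ.le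
    _ ≤ Γ * (κ ^ 2 / (2 * θ) * (Q z * Q z).trace) := by
        have := Matrix.trace_mul_self_nonneg_of_transpose_eq (hQsym z)
        gcongr
        linarith
    _ = Γ * κ ^ 2 / (2 * θ) * (Q z * Q z).trace := by ring

/-- If the smooth `Sym₀(d)`-valued field `Q` satisfies the co-rotational
equation `∂_t Q + (u·∇)Q − (WQ − QW) = Γ(LΔQ − θ⟨∇ψ(Q)⟩ + κQ)` on `ℝ^d × (0,T)`, where
`ψ` is `C²` and convex with Frobenius gradient `∇ψ` symmetric and commuting with `Q` on
`Sym₀(d)`, and `u` is smooth and divergence-free, then pointwise on `ℝ^d × (0,T)`,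
`∂_t[ψ(Q)] + (u·∇)[ψ(Q)] − ΓLΔ[ψ(Q)] ≤ (Γκ²/(2θ)) tr[Q²]`. -/
theorem corotational_parabolic_inequality (d : ℕ) (hd : d = 2 ∨ d = 3)
    (Γ L θ κ : ℝ) (hΓ : 0 < Γ) (hL : 0 < L) (hθ : 0 < θ) (hκ : 0 < κ)
    (ψ : Matrix (Fin d) (Fin d) ℝ → ℝ) (hψ : ContDiff ℝ 2 ψ)
    (hconv : ConvexOn ℝ Set.univ ψ)
    (gradψ : Matrix (Fin d) (Fin d) ℝ → Matrix (Fin d) (Fin d) ℝ)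
    (hgrad : ∀ X Y : Matrix (Fin d) (Fin d) ℝ, fderiv ℝ ψ X Y = ((gradψ X)ᵀ * Y).trace)
    (hgradQ : ∀ Q : Matrix (Fin d) (Fin d) ℝ, Qᵀ = Q → Q.trace = 0 →
      (gradψ Q)ᵀ = gradψ Q ∧ Q * gradψ Q = gradψ Q * Q)
    (T : ℝ) (hT : 0 < T)
    (u : SpTime d → (Fin d → ℝ)) (hu : ContDiff ℝ (⊤ : ℕ∞) u)
    (hdiv : ∀ z, ∑ i : Fin d, spd i u z i = 0)
    (Q : SpTime d → Matrix (Fin d) (Fin d) ℝ) (hQ : ContDiff ℝ (⊤ : ℕ∞) Q)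
    (hQsym : ∀ z, (Q z)ᵀ = Q z) (hQtr : ∀ z, (Q z).trace = 0)
    (heq : ∀ (x : Fin d → ℝ), ∀ t ∈ Set.Ioo (0 : ℝ) T,
      tpd Q (x, t) + (∑ i : Fin d, u (x, t) i • spd i Q (x, t))
          - (skewPart u (x, t) * Q (x, t) - Q (x, t) * skewPart u (x, t))
        = Γ • (L • slap Q (x, t) - θ • tfree (gradψ (Q (x, t))) + κ • Q (x, t))) :
    ∀ (x : Fin d → ℝ), ∀ t ∈ Set.Ioo (0 : ℝ) T,
      tpd (fun z => ψ (Q z)) (x, t)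
          + (∑ i : Fin d, u (x, t) i * spd i (fun z => ψ (Q z)) (x, t))
          - Γ * L * slap (fun z => ψ (Q z)) (x, t)
        ≤ Γ * κ ^ 2 / (2 * θ) * (Q (x, t) * Q (x, t)).trace :=
  corotational_parabolic_inequality_general d Γ L θ κ hΓ hL hθ ψ hψ hconv gradψ hgrad hgradQ T u Q
    hQ hQsym hQtr heq
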